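/- For any positive programs P, Q over a finite universe U and any alphabets H, B ⊆ U: P ≡_{⟨H,B⟩} Q holds if and only if P and Q have the same H-total models. In particular, for positive programs, ⟨H,B⟩-equivalence does not depend on B. -/

import Mathlib

structure Rule (α : Type*) where
  head : Finset α
  pbody : Finset α
  nbody : Finset α
deriving DecidableEq

abbrev Program (α : Type*) := Finset (Rule α)

variable {α : Type*} [DecidableEq α]

/-- An interpretation `Y` satisfies a rule. -/
def satRule (Y : Finset α) (r : Rule α) : Prop :=
  r.pbody ⊆ Y → r.nbody ∩ Y = ∅ → (r.head ∩ Y).Nonempty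

/-- `Y` is a model of the program `P`. -/
def satProg (Y : Finset α) (P : Program α) : Prop := ∀ r ∈ P, satRule Y r

/-- The Gelfond–Lifschitz reduct `P^Y`. -/
def reduct (P : Program α) (Y : Finset α) : Program α :=
  (P.filter (fun r => r.nbody ∩ Y = ∅)).image (fun r => ⟨r.head, r.pbody, ∅⟩)

/-- `Y` is an answer set of `P`: a minimal model of `P^Y`. -/
def isAS (P : Program α) (Y : Finset α) : Prop :=
  satProg Y (reduct P Y) ∧ ∀ Z, Z ⊂ Y → ¬ satProg Z (reduct P Y)

def heads (P : Program α) : Finset α := P.biUnion Rule.head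
def bodies (P : Program α) : Finset α := P.biUnion (fun r => r.pbody ∪ r.nbody)

/-- A positive program: no default negation. -/
def Positive (P : Program α) : Prop := ∀ r ∈ P, r.nbody = ∅

/-- A unary program: only facts `a ←` and rules `a ← b`. -/
def Unary (P : Program α) : Prop :=
  ∀ r ∈ P, r.nbody = ∅ ∧ r.head.card = 1 ∧ r.pbody.card ≤ 1

/-- Membership in the class `C_⟨H,B⟩`. -/
def inClass (H B : Finset α) (P : Program α) : Prop := heads P ⊆ H ∧ bodies P ⊆ B

/-- `V ⪯_H^B Z`. -/
def preceq (H B V Z : Finset α) : Prop := V ∩ H ⊆ Z ∩ H ∧ Z ∩ B ⊆ V ∩ B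

/-- `V ≺_H^B Z`. -/
def prec (H B V Z : Finset α) : Prop := preceq H B V Z ∧ V ∩ (H ∪ B) ≠ Z ∩ (H ∪ B)

/-- `Y` is an `H`-total model of `P`. -/
def Htotal (H : Finset α) (P : Program α) (Y : Finset α) : Prop :=
  satProg Y P ∧ ∀ Z, Z ⊂ Y → satProg Z (reduct P Y) → Z ∩ H ⊂ Y ∩ H

/-- The containment `P ⊆_⟨H,B⟩ Q`. -/
def containsHB (H B : Finset α) (P Q : Program α) : Prop :=
  ∀ R : Program α, inClass H B R → ∀ Y, isAS (P ∪ R) Y → isAS (Q ∪ R) Y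

/-- The equivalence `P ≡_⟨H,B⟩ Q`. -/
def equivHB (H B : Finset α) (P Q : Program α) : Prop :=
  ∀ R : Program α, inClass H B R → ∀ Y, isAS (P ∪ R) Y ↔ isAS (Q ∪ R) Y

/-- A witness against `P ⊆_⟨H,B⟩ Q`. -/
def Witness (H B : Finset α) (P Q : Program α) (X Y : Finset α) : Prop :=
  X ⊆ Y ∧ Htotal H P Y ∧
    (satProg Y Q → X ⊂ Y ∧ satProg X (reduct Q Y) ∧
      ∀ X', preceq H B X X' → X' ⊂ Y → ¬ satProg X' (reduct P Y))

/-- `(X,Y)` is `⪯_H^B`-maximal for `P`. -/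
def maximalHB (H B : Finset α) (P : Program α) (X Y : Finset α) : Prop :=
  satProg X (reduct P Y) ∧ ∀ X', prec H B X X' → X' ⊂ Y → ¬ satProg X' (reduct P Y)

/-- `(X,Y)` is an `⟨H,B⟩`-model of `P`. -/
def HBmodel (H B : Finset α) (P : Program α) (X Y : Finset α) : Prop :=
  X ⊆ Y ∧ Htotal H P Y ∧
    (X ⊂ Y → ∃ X', X' ⊂ Y ∧ X' ∩ (H ∪ B) = X ∧ maximalHB H B P X' Y)

/-!
For a positive program `P`, a set `Y` is an `H`-total model of `P` exactly when it is an answer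
set of `P` extended by the facts `Y ∩ H`; these facts form a program of `C_⟨H,B⟩` for every `B`,
so `⟨H,B⟩`-equivalent programs have the same `H`-total models.

Conversely, an answer set `Y` of `P ∪ R` with `R ∈ C_⟨H,B⟩` is `H`-total for `P`, hence a model
of `Q`. If some `Z ⊂ Y` were a model of `Q ∪ R^Y`, a minimal model `M ⊆ Z` of `Q` plus the facts
`Z ∩ H` would be `H`-total for `Q`, hence a model of `P`; and since the heads of `R` lie in `H`
and `M` agrees with `Z` on `H`, `M` still satisfies `R^Y`, against the minimality of `Y`.
-/

open Finset

lemma reduct_union (P R : Program α) (Y : Finset α) :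
    reduct (P ∪ R) Y = reduct P Y ∪ reduct R Y := by
  simp [reduct, filter_union, image_union]

lemma Positive.reduct_eq {P : Program α} (hP : Positive P) (Y : Finset α) : reduct P Y = P := by
  ext ⟨h, p, n⟩
  simp only [reduct, mem_image, mem_filter, Rule.mk.injEq]
  constructor
  · rintro ⟨r, ⟨hr, -⟩, rfl, rfl, rfl⟩
    simpa [← hP r hr] using hr
  · intro hr
    obtain rfl : n = ∅ := hP _ hr
    exact ⟨_, ⟨hr, empty_inter Y⟩, rfl, rfl, rfl⟩

lemma Positive.union {P Q : Program α} (hP : Positive P) (hQ : Positive Q) :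
    Positive (P ∪ Q) := by
  intro r hr
  rcases mem_union.1 hr with h | h
  exacts [hP r h, hQ r h]

lemma positive_reduct (R : Program α) (Y : Finset α) : Positive (reduct R Y) := by
  intro r hr
  obtain ⟨_, _, rfl⟩ := mem_image.1 hr
  rfl

lemma heads_reduct_subset (R : Program α) (Y : Finset α) : heads (reduct R Y) ⊆ heads R := by
  intro a ha
  obtain ⟨_, hr', ha⟩ := mem_biUnion.1 ha
  obtain ⟨r, hr, rfl⟩ := mem_image.1 hr'
  exact mem_biUnion.2 ⟨r, (mem_filter.1 hr).1, ha⟩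

lemma satProg_union {Y : Finset α} {P Q : Program α} :
    satProg Y (P ∪ Q) ↔ satProg Y P ∧ satProg Y Q := by
  simp [satProg, or_imp, forall_and]

lemma Positive.satProg_reduct_union {P R : Program α} (hP : Positive P) {Y Z : Finset α} :
    satProg Z (reduct (P ∪ R) Y) ↔ satProg Z P ∧ satProg Z (reduct R Y) := by
  rw [reduct_union, hP.reduct_eq, satProg_union]

lemma Positive.satProg_of_subset {R : Program α} (hR : Positive R) {H : Finset α}
    (hH : heads R ⊆ H) {Z M : Finset α} (hZ : satProg Z R) (hMZ : M ⊆ Z) (hZM : Z ∩ H ⊆ M) :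
    satProg M R := by
  intro r hr hbody _
  obtain ⟨a, ha⟩ := hZ r hr (hbody.trans hMZ) (by rw [hR r hr, empty_inter])
  have haH : a ∈ H := hH (mem_biUnion.2 ⟨r, hr, (mem_inter.1 ha).1⟩)
  exact ⟨a, mem_inter.2 ⟨(mem_inter.1 ha).1, hZM (mem_inter.2 ⟨(mem_inter.1 ha).2, haH⟩)⟩⟩

def facts (A : Finset α) : Program α := A.image fun a => ⟨{a}, ∅, ∅⟩

lemma satProg_facts {Z A : Finset α} : satProg Z (facts A) ↔ A ⊆ Z := by
  simp [satProg, satRule, facts, Finset.Nonempty, subset_iff]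

lemma positive_facts (A : Finset α) : Positive (facts A) := by
  intro r hr
  obtain ⟨_, _, rfl⟩ := mem_image.1 hr
  rfl

lemma heads_facts (A : Finset α) : heads (facts A) = A := by
  ext a
  simp [heads, facts]

lemma inClass_facts {H A : Finset α} (B : Finset α) (hA : A ⊆ H) : inClass H B (facts A) :=
  ⟨(heads_facts A).trans_subset hA, by simp [bodies, facts]⟩

lemma Htotal.of_isAS_union {H : Finset α} {P R : Program α} (hP : Positive P)
    (hH : heads R ⊆ H) {Y : Finset α} (hY : isAS (P ∪ R) Y) : Htotal H P Y := by
  obtain ⟨hYsat, hYmin⟩ := hY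
  rw [hP.satProg_reduct_union] at hYsat
  refine ⟨hYsat.1, fun Z hZY hZ => Finset.ssubset_iff_subset_ne.2
    ⟨inter_subset_inter_right hZY.subset, fun hZH => hYmin Z hZY ?_⟩⟩
  rw [hP.reduct_eq] at hZ
  refine hP.satProg_reduct_union.2 ⟨hZ, ?_⟩
  refine (positive_reduct R Y).satProg_of_subset ((heads_reduct_subset R Y).trans hH) hYsat.2
    hZY.subset ?_
  rw [← hZH]
  exact inter_subset_left

lemma Htotal.isAS_union_facts {H : Finset α} {P : Program α} (hP : Positive P) {Y : Finset α}
    (hY : Htotal H P Y) : isAS (P ∪ facts (Y ∩ H)) Y := by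
  rw [isAS, (hP.union (positive_facts _)).reduct_eq]
  refine ⟨satProg_union.2 ⟨hY.1, satProg_facts.2 inter_subset_left⟩, fun Z hZY hZ => ?_⟩
  rw [satProg_union, satProg_facts] at hZ
  have hZH : Z ∩ H ⊂ Y ∩ H := hY.2 Z hZY (by rw [hP.reduct_eq]; exact hZ.1)
  exact hZH.not_subset (subset_inter hZ.2 inter_subset_right)

lemma htotal_iff_isAS_union_facts {H : Finset α} {P : Program α} (hP : Positive P)
    {Y : Finset α} : Htotal H P Y ↔ isAS (P ∪ facts (Y ∩ H)) Y :=
  ⟨Htotal.isAS_union_facts hP,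
    Htotal.of_isAS_union hP ((heads_facts (Y ∩ H)).trans_subset inter_subset_right)⟩

lemma exists_htotal_subset {P : Program α} (hP : Positive P) (H : Finset α) {Z : Finset α}
    (hZ : satProg Z P) : ∃ M ⊆ Z, Z ∩ H ⊆ M ∧ Htotal H P M := by
  obtain ⟨M, hMZ, hM⟩ := exists_minimal_le_of_wellFoundedLT
    (fun M => satProg M (P ∪ facts (Z ∩ H))) Z
    (satProg_union.2 ⟨hZ, satProg_facts.2 inter_subset_left⟩)
  have hZM : Z ∩ H ⊆ M := satProg_facts.1 (satProg_union.1 hM.prop).2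
  have hMH : M ∩ H = Z ∩ H :=
    Subset.antisymm (inter_subset_inter_right hMZ) (subset_inter hZM inter_subset_right)
  refine ⟨M, hMZ, hZM, htotal_iff_isAS_union_facts hP |>.2 ?_⟩
  rw [hMH, isAS, (hP.union (positive_facts _)).reduct_eq]
  exact minimal_iff_forall_lt.1 hM

lemma isAS_union_of_same_htotal {H : Finset α} {P Q R : Program α} (hP : Positive P)
    (hQ : Positive Q) (hPQ : ∀ Y, Htotal H P Y ↔ Htotal H Q Y) (hH : heads R ⊆ H)
    {Y : Finset α} (hY : isAS (P ∪ R) Y) : isAS (Q ∪ R) Y := by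
  have hYQ : satProg Y Q := ((hPQ Y).1 (Htotal.of_isAS_union hP hH hY)).1
  obtain ⟨hYsat, hYmin⟩ := hY
  rw [hP.satProg_reduct_union] at hYsat
  refine ⟨hQ.satProg_reduct_union.2 ⟨hYQ, hYsat.2⟩, fun Z hZY hZ => ?_⟩
  rw [hQ.satProg_reduct_union] at hZ
  obtain ⟨M, hMZ, hZM, hM⟩ := exists_htotal_subset hQ H hZ.1
  refine hYmin M (lt_of_le_of_lt hMZ hZY) (hP.satProg_reduct_union.2 ⟨((hPQ M).2 hM).1, ?_⟩)
  exact (positive_reduct R Y).satProg_of_subset ((heads_reduct_subset R Y).trans hH) hZ.2 hMZ hZM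

theorem positive_equiv_iff_same_Htotal_general (P Q : Program α)
    (H B : Finset α) (hP : Positive P) (hQ : Positive Q) :
    equivHB H B P Q ↔ ∀ Y, Htotal H P Y ↔ Htotal H Q Y := by
  constructor
  · intro hPQ Y
    rw [htotal_iff_isAS_union_facts hP, htotal_iff_isAS_union_facts hQ]
    exact hPQ _ (inClass_facts B inter_subset_right) Y
  · intro hPQ R hR Y
    exact ⟨isAS_union_of_same_htotal hP hQ hPQ hR.1,
      isAS_union_of_same_htotal hQ hP (fun Y => (hPQ Y).symm) hR.1⟩

theorem positive_equiv_iff_same_Htotal [Fintype α] (P Q : Program α)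
    (H B : Finset α) (hP : Positive P) (hQ : Positive Q) :
    equivHB H B P Q ↔ ∀ Y, Htotal H P Y ↔ Htotal H Q Y :=
  positive_equiv_iff_same_Htotal_general P Q H B hP hQ
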